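/- (Wolstenholme) For every prime p ≥ 5, the numerator of the harmonic number H(p−1) is divisible by p², i.e., ν_p(H(p−1)) ≥ 2. -/

import Mathlib

def H (n : ℕ) : ℚ := ∑ i ∈ Finset.range n, (1 : ℚ) / (i + 1)

/-!
Pairing `1/i` with `1/(p - i)` gives `2 H(p-1) = p · ∑_{0<i<p} 1/(i(p - i))`, so it suffices that
the last sum is divisible by `p`. Modulo `p` its terms are `-1/i²`, and
`∑_{x ∈ 𝔽_p} x⁻² = ∑_{x ∈ 𝔽_p} x² = 0` since `2 < p - 1`. Multiplying by `((p - 1)!)²`, which is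
prime to `p`, turns this into a congruence between integers.
-/

open Finset Nat

theorem FiniteField.sum_inv_pow_lt_card_sub_one {K : Type*} [Field K] [Fintype K] {i : ℕ}
    (h : i < Fintype.card K - 1) : ∑ x : K, x⁻¹ ^ i = 0 := by
  rw [← FiniteField.sum_pow_lt_card_sub_one (K := K) i h]
  exact Fintype.sum_bijective _ inv_involutive.bijective _ _ fun _ => rfl

theorem ZMod.sum_range_natCast {M : Type*} [AddCommMonoid M] {n : ℕ} [NeZero n]
    (f : ZMod n → M) : ∑ i ∈ range n, f i = ∑ x, f x := by
  refine sum_nbij' (↑) ZMod.val (by simp) (by simp [ZMod.val_lt]) (fun i hi => ?_) (by simp)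
    (fun _ _ => rfl)
  exact ZMod.val_cast_of_lt (mem_range.mp hi)

theorem ZMod.natCast_ne_zero_of_pos_of_lt {p a : ℕ} (h0 : 0 < a) (hlt : a < p) :
    (a : ZMod p) ≠ 0 :=
  (ZMod.natCast_eq_zero_iff a p).not.mpr (Nat.not_dvd_of_pos_of_lt h0 hlt)

theorem padicValRat_natCast_div_of_not_dvd {p a b : ℕ} [Fact p.Prime] (ha : a ≠ 0)
    (hb : ¬ p ∣ b) : padicValRat p (a / b) = padicValNat p a := by
  have hb0 : b ≠ 0 := by rintro rfl; exact hb (dvd_zero p)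
  rw [padicValRat.div (by exact_mod_cast ha) (by exact_mod_cast hb0), padicValRat.of_nat,
    padicValRat.of_nat, padicValNat.eq_zero_of_not_dvd hb]
  simp

theorem H_eq_harmonic : H = harmonic := by
  ext n
  simp [H, harmonic]

theorem two_mul_H (n : ℕ) :
    2 * H n = (n + 1) * ∑ i ∈ range n, 1 / (((i : ℚ) + 1) * (n - i)) := by
  have hreflect : H n = ∑ i ∈ range n, 1 / ((n : ℚ) - i) := by
    rw [H, ← sum_range_reflect]
    refine sum_congr rfl fun i hi => ?_
    have hi := mem_range.mp hi
    rw [← Nat.cast_add_one, show n - 1 - i + 1 = n - i by omega, Nat.cast_sub hi.le]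
  rw [two_mul]
  nth_rw 2 [hreflect]
  rw [H, ← sum_add_distrib, mul_sum]
  refine sum_congr rfl fun i hi => ?_
  have : (n : ℚ) - i ≠ 0 := sub_ne_zero.mpr (by exact_mod_cast (mem_range.mp hi).ne')
  field_simp
  ring

def harmonicPairNumerator (n : ℕ) : ℕ := ∑ i ∈ range n, n ! / (i + 1) * (n ! / (n - i))

theorem sum_inv_mul_sub_eq_harmonicPairNumerator_div (n : ℕ) :
    ∑ i ∈ range n, 1 / (((i : ℚ) + 1) * (n - i)) =
      (harmonicPairNumerator n : ℚ) / (n ! ^ 2 : ℕ) := by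
  rw [harmonicPairNumerator, Nat.cast_sum, sum_div]
  refine sum_congr rfl fun i hi => ?_
  have hi := mem_range.mp hi
  rw [Nat.cast_mul, Nat.cast_div (Nat.dvd_factorial i.succ_pos hi) (by positivity),
    Nat.cast_div (Nat.dvd_factorial (by omega) (by omega)) (Nat.cast_ne_zero.mpr (by omega)),
    Nat.cast_sub hi.le]
  have : (n ! : ℚ) ≠ 0 := by positivity
  push_cast
  field_simp

theorem H_eq_harmonicPairNumerator_div (n : ℕ) :
    H n = ((n + 1) * harmonicPairNumerator n : ℕ) / (2 * n ! ^ 2 : ℕ) := by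
  have h := two_mul_H n
  rw [sum_inv_mul_sub_eq_harmonicPairNumerator_div] at h
  push_cast at h ⊢
  have : (n ! : ℚ) ≠ 0 := by positivity
  field_simp at h ⊢
  linear_combination h

theorem prime_dvd_harmonicPairNumerator {p : ℕ} [Fact p.Prime] (hp : 5 ≤ p) :
    p ∣ harmonicPairNumerator (p - 1) := by
  rw [← ZMod.natCast_eq_zero_iff]
  have hterm : ∀ i ∈ range (p - 1),
      (((p - 1)! / (i + 1) * ((p - 1)! / (p - 1 - i)) : ℕ) : ZMod p) =
        -((p - 1)! : ZMod p) ^ 2 * ((i + 1 : ℕ) : ZMod p)⁻¹ ^ 2 := by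
    intro i hi
    have hi := mem_range.mp hi
    have hrefl : ((p - 1 - i : ℕ) : ZMod p) = -((i + 1 : ℕ) : ZMod p) := by
      rw [eq_neg_iff_add_eq_zero, ← Nat.cast_add, show p - 1 - i + (i + 1) = p by omega,
        ZMod.natCast_self]
    rw [Nat.cast_mul, Nat.cast_div (Nat.dvd_factorial i.succ_pos (by omega))
        (ZMod.natCast_ne_zero_of_pos_of_lt i.succ_pos (by omega)),
      Nat.cast_div (Nat.dvd_factorial (by omega) (by omega))
        (ZMod.natCast_ne_zero_of_pos_of_lt (by omega) (by omega)), hrefl]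
    ring
  calc (harmonicPairNumerator (p - 1) : ZMod p)
      = -((p - 1)! : ZMod p) ^ 2 * ∑ i ∈ range (p - 1), ((i + 1 : ℕ) : ZMod p)⁻¹ ^ 2 := by
        rw [harmonicPairNumerator, Nat.cast_sum, sum_congr rfl hterm, mul_sum]
    _ = -((p - 1)! : ZMod p) ^ 2 * ∑ x : ZMod p, x⁻¹ ^ 2 := by
        rw [← ZMod.sum_range_natCast,
          show range p = range (p - 1 + 1) by rw [Nat.sub_one_add_one (by omega)], sum_range_succ']
        simp
    _ = 0 := by
        rw [FiniteField.sum_inv_pow_lt_card_sub_one (by rw [ZMod.card]; omega), mul_zero]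

theorem stmt_16 (p : ℕ) (hp : p.Prime) (hp5 : 5 ≤ p) :
    2 ≤ padicValRat p (H (p - 1)) := by
  have := Fact.mk hp
  have hH : H (p - 1) ≠ 0 := by
    rw [H_eq_harmonic]
    exact (harmonic_pos (by omega)).ne'
  have hden : ¬ p ∣ 2 * (p - 1)! ^ 2 := by
    rintro h
    rcases hp.dvd_mul.mp h with h2 | hF
    · exact absurd (Nat.le_of_dvd two_pos h2) (by omega)
    · exact absurd (hp.dvd_factorial.mp (hp.dvd_of_dvd_pow hF)) (by omega)
  rw [H_eq_harmonicPairNumerator_div, Nat.sub_one_add_one hp.ne_zero] at hH ⊢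
  have hnum : p * harmonicPairNumerator (p - 1) ≠ 0 := by
    rintro h
    simp [h] at hH
  rw [padicValRat_natCast_div_of_not_dvd hnum hden]
  have hdvd : p ^ 2 ∣ p * harmonicPairNumerator (p - 1) := by
    rw [sq]
    exact mul_dvd_mul_left p (prime_dvd_harmonicPairNumerator hp5)
  exact_mod_cast (padicValNat_dvd_iff_le hnum).mp hdvd
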